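/- Let A₁,…,Aₘ be real n×n matrices and let B be the linear operator X ↦ A₁ X A₁ᵀ + ··· + Aₘ X Aₘᵀ on the space S of real symmetric n×n matrices endowed with the Frobenius norm. Then (1/√m)·ρ(B)^{1/2} ≤ ρ(A₁,…,Aₘ) ≤ ρ(B)^{1/2}, where ρ(B) = lim_{k→∞} ‖B^k‖^{1/k} is the spectral radius of the operator B. -/

import Mathlib

open scoped Kronecker

/-- The ℓ₂ operator norm of a square real matrix. -/
noncomputable def l2OpNorm {ι : Type*} [Fintype ι] [DecidableEq ι]
    (A : Matrix ι ι ℝ) : ℝ :=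
  ‖Matrix.toEuclideanCLM (𝕜 := ℝ) A‖

/-- The product `A_{σ_k} ⋯ A_{σ_1}` associated to the word `σ`. -/
noncomputable def wordProd {ι : Type*} [Fintype ι] [DecidableEq ι] {m k : ℕ}
    (A : Fin m → Matrix ι ι ℝ) (σ : Fin k → Fin m) : Matrix ι ι ℝ :=
  (List.ofFn fun i => A (σ i)).reverse.prod

/-- The joint spectral radius of `A₁, …, Aₘ` (w.r.t. the ℓ₂ operator norm). -/
noncomputable def jsr {ι : Type*} [Fintype ι] [DecidableEq ι] {m : ℕ}
    (A : Fin m → Matrix ι ι ℝ) : ℝ :=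
  Filter.atTop.limsup fun k : ℕ =>
    ⨆ σ : Fin k → Fin m, l2OpNorm (wordProd A σ) ^ ((1 : ℝ) / (k : ℝ))

/-- The spectral radius of a single matrix, `ρ(A) = lim_k ‖A^k‖^{1/k}`. -/
noncomputable def specRad {ι : Type*} [Fintype ι] [DecidableEq ι]
    (A : Matrix ι ι ℝ) : ℝ :=
  Filter.atTop.limsup fun k : ℕ => l2OpNorm (A ^ k) ^ ((1 : ℝ) / (k : ℝ))

open scoped Matrix

attribute [local instance]
  Matrix.frobeniusNormedAddCommGroup Matrix.frobeniusNormedSpace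

/-- The space `S` of real symmetric `n × n` matrices (with the
Frobenius norm inherited from the matrix space). -/
def symMat (n : ℕ) : Submodule ℝ (Matrix (Fin n) (Fin n) ℝ) where
  carrier := {X | X.IsSymm}
  add_mem' := fun ha hb => ha.add hb
  zero_mem' := Matrix.isSymm_zero
  smul_mem' := fun c _ hx => hx.smul c

/-- The semidefinite lifting of `A` as a linear map `X ↦ A X Aᵀ` on the space
of symmetric matrices. -/
noncomputable def liftMap {n : ℕ} (A : Matrix (Fin n) (Fin n) ℝ) :
    symMat n →ₗ[ℝ] symMat n where
  toFun X := ⟨A * X.1 * Aᵀ, by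
    have hX : (X.1)ᵀ = X.1 := X.2
    show (A * X.1 * Aᵀ)ᵀ = A * X.1 * Aᵀ
    simp [Matrix.transpose_mul, Matrix.mul_assoc, hX]⟩
  map_add' X Y := by
    ext : 2
    simp [Matrix.mul_add, Matrix.add_mul]
  map_smul' c X := by
    ext : 2
    simp [Matrix.mul_smul, Matrix.smul_mul]

/-- The semidefinite lifting of `A` as a continuous linear operator
`X ↦ A X Aᵀ` on the space of symmetric matrices with the Frobenius norm. -/
noncomputable def liftCLM {n : ℕ} (A : Matrix (Fin n) (Fin n) ℝ) :
    symMat n →L[ℝ] symMat n :=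
  LinearMap.toContinuousLinearMap (liftMap A)

/-- The spectral radius of a continuous linear operator,
`ρ(B) = lim_k ‖B^k‖^{1/k}`. -/
noncomputable def specRadOp {E : Type*} [NormedAddCommGroup E]
    [NormedSpace ℝ E] (B : E →L[ℝ] E) : ℝ :=
  Filter.atTop.limsup fun k : ℕ => ‖B ^ k‖ ^ ((1 : ℝ) / (k : ℝ))

/-- The joint spectral radius of a finite family of continuous linear
operators on a normed space. -/
noncomputable def jsrOp {E : Type*} [NormedAddCommGroup E] [NormedSpace ℝ E]
    {m : ℕ} (T : Fin m → (E →L[ℝ] E)) : ℝ :=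
  Filter.atTop.limsup fun k : ℕ =>
    ⨆ σ : Fin k → Fin m,
      ‖(List.ofFn fun i => T (σ i)).reverse.prod‖ ^ ((1 : ℝ) / (k : ℝ))

/-! ### Auxiliary lemmas -/

noncomputable instance symMatCLMNormedAddCommGroup {n : ℕ} :
    NormedAddCommGroup (symMat n →L[ℝ] symMat n) :=
  ContinuousLinearMap.toNormedAddCommGroup

section Helpers

open Filter

lemma l2OpNorm_nonneg' {ι : Type*} [Fintype ι] [DecidableEq ι]
    (A : Matrix ι ι ℝ) : 0 ≤ l2OpNorm A := norm_nonneg _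

lemma l2OpNorm_mul' {ι : Type*} [Fintype ι] [DecidableEq ι]
    (A B : Matrix ι ι ℝ) : l2OpNorm (A * B) ≤ l2OpNorm A * l2OpNorm B := by
  unfold l2OpNorm
  rw [map_mul]
  exact norm_mul_le _ _

lemma l2OpNorm_one' {ι : Type*} [Fintype ι] [DecidableEq ι] :
    l2OpNorm (1 : Matrix ι ι ℝ) ≤ 1 := by
  unfold l2OpNorm
  rw [map_one]
  exact ContinuousLinearMap.norm_id_le

open Finset in
lemma frobenius_sq {ι : Type*} [Fintype ι] [DecidableEq ι] (M : Matrix ι ι ℝ) :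
    ‖M‖ ^ 2 = ∑ i, ∑ j, (M i j) ^ 2 := by
  rw [Matrix.frobenius_norm_def]
  rw [← Real.rpow_natCast _ 2, ← Real.rpow_mul (by positivity)]
  norm_num

lemma toEuclideanCLM_apply' {ι : Type*} [Fintype ι] [DecidableEq ι] (M : Matrix ι ι ℝ)
    (x : EuclideanSpace ℝ ι) (i : ι) :
    (Matrix.toEuclideanCLM (𝕜 := ℝ) M x) i = ∑ j, M i j * x j := by
  have h := Matrix.ofLp_toEuclideanCLM (𝕜 := ℝ) M x
  have : (Matrix.toEuclideanCLM (𝕜 := ℝ) M x) i = (Matrix.toLin' M (WithLp.equiv _ _ x)) i := by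
    rw [h]; rfl
  rw [this]
  simp [Matrix.toLin'_apply, Matrix.mulVec, dotProduct]

lemma l2OpNorm_le_frobenius {ι : Type*} [Fintype ι] [DecidableEq ι] (M : Matrix ι ι ℝ) :
    l2OpNorm M ≤ ‖M‖ := by
  refine ContinuousLinearMap.opNorm_le_bound _ (norm_nonneg M) fun x => ?_
  have hx : ‖x‖ = Real.sqrt (∑ j, (x j) ^ 2) := by
    rw [EuclideanSpace.norm_eq]
    exact congrArg _ (Finset.sum_congr rfl fun j _ => by rw [Real.norm_eq_abs, sq_abs])
  have hMx : ‖Matrix.toEuclideanCLM (𝕜 := ℝ) M x‖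
      = Real.sqrt (∑ i, (∑ j, M i j * x j) ^ 2) := by
    rw [EuclideanSpace.norm_eq]
    exact congrArg _ (Finset.sum_congr rfl fun i _ => by
      rw [Real.norm_eq_abs, sq_abs, toEuclideanCLM_apply'])
  rw [hx, hMx]
  rw [← Real.sqrt_sq (norm_nonneg M), ← Real.sqrt_mul (sq_nonneg _)]
  apply Real.sqrt_le_sqrt
  rw [frobenius_sq, Finset.sum_mul]
  apply Finset.sum_le_sum
  intro i _
  calc (∑ j, M i j * x j) ^ 2 ≤ (∑ j, M i j ^ 2) * (∑ j, x j ^ 2) :=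
        Finset.sum_mul_sq_le_sq_mul_sq _ _ _
    _ = _ := rfl

lemma frobenius_le_l2OpNorm {ι : Type*} [Fintype ι] [DecidableEq ι] (M : Matrix ι ι ℝ) :
    ‖M‖ ≤ Real.sqrt (Fintype.card ι) * l2OpNorm M := by
  have key : ∀ j : ι, ∑ i, (M i j) ^ 2 ≤ l2OpNorm M ^ 2 := by
    intro j
    have h1 : ‖Matrix.toEuclideanCLM (𝕜 := ℝ) M (EuclideanSpace.single j (1:ℝ))‖
        ≤ l2OpNorm M * ‖EuclideanSpace.single j (1:ℝ)‖ :=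
      ContinuousLinearMap.le_opNorm _ _
    rw [EuclideanSpace.norm_single] at h1
    simp only [norm_one, mul_one] at h1
    have h2 : ‖Matrix.toEuclideanCLM (𝕜 := ℝ) M (EuclideanSpace.single j (1:ℝ))‖ ^ 2
        = ∑ i, (M i j)^2 := by
      rw [EuclideanSpace.norm_eq, Real.sq_sqrt (by positivity)]
      refine Finset.sum_congr rfl fun i _ => ?_
      rw [Real.norm_eq_abs, sq_abs, toEuclideanCLM_apply']
      refine congrArg (· ^ 2) ((Finset.sum_eq_single_of_mem j (Finset.mem_univ j) ?_).trans ?_)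
      · intro j' _ hj'
        simp [EuclideanSpace.single_apply, hj']
      · simp [EuclideanSpace.single_apply]
    rw [← h2]
    exact pow_le_pow_left₀ (norm_nonneg _) h1 2
  have hsq : ‖M‖ ^ 2 ≤ (Fintype.card ι) * l2OpNorm M ^ 2 := by
    rw [frobenius_sq, Finset.sum_comm]
    calc ∑ j, ∑ i, (M i j)^2 ≤ ∑ _j : ι, l2OpNorm M ^ 2 :=
          Finset.sum_le_sum fun j _ => key j
      _ = (Fintype.card ι) * l2OpNorm M ^ 2 := by
          rw [Finset.sum_const, nsmul_eq_mul, Finset.card_univ]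
  calc ‖M‖ = Real.sqrt (‖M‖ ^ 2) := (Real.sqrt_sq (norm_nonneg _)).symm
    _ ≤ Real.sqrt ((Fintype.card ι) * l2OpNorm M ^ 2) := Real.sqrt_le_sqrt hsq
    _ = Real.sqrt (Fintype.card ι) * l2OpNorm M := by
        rw [Real.sqrt_mul (by positivity), Real.sqrt_sq (l2OpNorm_nonneg' M)]

lemma wordProd_zero' {ι : Type*} [Fintype ι] [DecidableEq ι] {m : ℕ}
    (A : Fin m → Matrix ι ι ℝ) (σ : Fin 0 → Fin m) : wordProd A σ = 1 := by
  simp [wordProd]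

lemma wordProd_cons' {ι : Type*} [Fintype ι] [DecidableEq ι] {m k : ℕ}
    (A : Fin m → Matrix ι ι ℝ) (i : Fin m) (σ : Fin k → Fin m) :
    wordProd A (Fin.cons i σ) = wordProd A σ * A i := by
  unfold wordProd
  rw [List.ofFn_succ]
  simp [Fin.cons_succ]

lemma l2OpNorm_wordProd_le {ι : Type*} [Fintype ι] [DecidableEq ι] {m : ℕ}
    (A : Fin m → Matrix ι ι ℝ) {C : ℝ} (hC : ∀ i, l2OpNorm (A i) ≤ C) (h1 : 1 ≤ C) :
    ∀ {k : ℕ} (σ : Fin k → Fin m), l2OpNorm (wordProd A σ) ≤ C ^ k := by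
  intro k
  induction k with
  | zero => intro σ; rw [wordProd_zero']; simpa using l2OpNorm_one'
  | succ k ih =>
      intro σ
      rw [← Fin.cons_self_tail σ, wordProd_cons']
      calc l2OpNorm (wordProd A (Fin.tail σ) * A (σ 0))
          ≤ l2OpNorm (wordProd A (Fin.tail σ)) * l2OpNorm (A (σ 0)) := l2OpNorm_mul' _ _
        _ ≤ C ^ k * C := mul_le_mul (ih _) (hC _) (l2OpNorm_nonneg' _)
            (by positivity)
        _ = C ^ (k+1) := by ring

lemma liftCLM_apply' {n : ℕ} (A : Matrix (Fin n) (Fin n) ℝ) (X : symMat n) :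
    (liftCLM A X : Matrix (Fin n) (Fin n) ℝ) = A * X.1 * Aᵀ := rfl

lemma expansion {n m : ℕ} (A : Fin m → Matrix (Fin n) (Fin n) ℝ) (k : ℕ) (X : symMat n) :
    ((((∑ i, liftCLM (A i)) ^ k) X : symMat n) : Matrix (Fin n) (Fin n) ℝ)
      = ∑ σ : Fin k → Fin m,
          wordProd A σ * (X : Matrix (Fin n) (Fin n) ℝ) * (wordProd A σ)ᵀ := by
  induction k generalizing X with
  | zero =>
      rw [pow_zero]
      rw [Fintype.sum_unique]
      simp [wordProd_zero']
  | succ k ih =>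
      rw [pow_succ, ContinuousLinearMap.mul_apply]
      have hBX : ((∑ i, liftCLM (A i)) X) = ∑ i, liftCLM (A i) X := by
        rw [ContinuousLinearMap.sum_apply]
      rw [hBX, map_sum]
      rw [AddSubmonoidClass.coe_finset_sum]
      have step : ∀ i : Fin m,
          ((((∑ j, liftCLM (A j)) ^ k) (liftCLM (A i) X) : symMat n)
              : Matrix (Fin n) (Fin n) ℝ)
            = ∑ σ : Fin k → Fin m,
                wordProd A (Fin.cons i σ) * (X : Matrix (Fin n) (Fin n) ℝ)
                  * (wordProd A (Fin.cons i σ))ᵀ := by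
        intro i
        rw [ih]
        refine Finset.sum_congr rfl fun σ _ => ?_
        rw [liftCLM_apply', wordProd_cons', Matrix.transpose_mul]
        simp only [Matrix.mul_assoc]
      calc ∑ i, ((((∑ j, liftCLM (A j)) ^ k) (liftCLM (A i) X) : symMat n)
              : Matrix (Fin n) (Fin n) ℝ)
          = ∑ i, ∑ σ : Fin k → Fin m,
              wordProd A (Fin.cons i σ) * (X : Matrix (Fin n) (Fin n) ℝ)
                * (wordProd A (Fin.cons i σ))ᵀ := Finset.sum_congr rfl fun i _ => step i
        _ = ∑ σ : Fin (k+1) → Fin m,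
              wordProd A σ * (X : Matrix (Fin n) (Fin n) ℝ) * (wordProd A σ)ᵀ := by
            have h1 : ∑ p : Fin m × (Fin k → Fin m),
                wordProd A (Fin.cons p.1 p.2) * (X : Matrix (Fin n) (Fin n) ℝ)
                  * (wordProd A (Fin.cons p.1 p.2))ᵀ
                = ∑ i, ∑ σ : Fin k → Fin m,
                    wordProd A (Fin.cons i σ) * (X : Matrix (Fin n) (Fin n) ℝ)
                      * (wordProd A (Fin.cons i σ))ᵀ :=
              Fintype.sum_prod_type
                (f := fun p : Fin m × (Fin k → Fin m) =>
                  wordProd A (Fin.cons p.1 p.2) * (X : Matrix (Fin n) (Fin n) ℝ)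
                    * (wordProd A (Fin.cons p.1 p.2))ᵀ)
            rw [← h1]
            exact Fintype.sum_equiv (Fin.consEquiv fun _ => Fin m) _ _ fun p => rfl

lemma ev_rpow_le {c : ℝ} (hc : 0 ≤ c) {ε : ℝ} (hε : 0 < ε) :
    ∀ᶠ k : ℕ in Filter.atTop, c ^ ((1:ℝ)/(k:ℝ)) ≤ 1 + ε := by
  rcases eq_or_lt_of_le hc with h0 | hpos
  · filter_upwards [Filter.eventually_ge_atTop 1] with k hk
    have hk' : (0:ℝ) < (k:ℝ) := by exact_mod_cast hk
    rw [← h0, Real.zero_rpow (by positivity)]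
    linarith
  · have heq : (fun k : ℕ => c ^ ((1:ℝ)/(k:ℝ)))
        = fun k : ℕ => Real.exp (Real.log c / (k:ℝ)) := by
      funext k
      rw [Real.rpow_def_of_pos hpos, mul_one_div]
    have ht : Filter.Tendsto (fun k : ℕ => c ^ ((1:ℝ)/(k:ℝ))) Filter.atTop (nhds 1) := by
      rw [heq, ← Real.exp_zero]
      exact (Real.continuous_exp.continuousAt.tendsto).comp
        (tendsto_const_div_atTop_nhds_zero_nat _)
    exact ht.eventually_le_const (by linarith)

lemma limsup_le_of_ev {u : ℕ → ℝ} {a : ℝ} (h0 : ∀ k, 0 ≤ u k)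
    (h : ∀ᶠ k in Filter.atTop, u k ≤ a) : Filter.limsup u Filter.atTop ≤ a :=
  Filter.limsup_le_of_le (Filter.isCoboundedUnder_le_of_le _ h0) h

lemma limsup_nonneg' {u : ℕ → ℝ} (h0 : ∀ k, 0 ≤ u k) {C : ℝ} (hb : ∀ k, u k ≤ C) :
    0 ≤ Filter.limsup u Filter.atTop :=
  Filter.le_limsup_of_frequently_le (Filter.Frequently.of_forall h0)
    (Filter.isBoundedUnder_of ⟨C, fun k => hb k⟩)

lemma le_of_eps {x : ℝ} {f : ℝ → ℝ} (hf : Continuous f) (h : ∀ ε > 0, x ≤ f ε) :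
    x ≤ f 0 := by
  refine ge_of_tendsto ((hf.tendsto 0).mono_left
    (nhdsWithin_le_nhds : nhdsWithin (0:ℝ) (Set.Ioi 0) ≤ nhds 0)) ?_
  filter_upwards [self_mem_nhdsWithin] with ε hε using h ε hε

lemma pow_rpow_inv' {x : ℝ} (hx : 0 ≤ x) {k : ℕ} (hk : k ≠ 0) :
    (x ^ k) ^ ((1:ℝ)/(k:ℝ)) = x := by
  rw [← Real.rpow_natCast x k, ← Real.rpow_mul hx]
  rw [mul_one_div, div_self (by exact_mod_cast hk), Real.rpow_one]

lemma rpow_inv_pow' {x : ℝ} (hx : 0 ≤ x) {k : ℕ} (hk : k ≠ 0) :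
    (x ^ ((1:ℝ)/(k:ℝ))) ^ k = x := by
  rw [← Real.rpow_natCast _ k, ← Real.rpow_mul hx]
  rw [one_div, inv_mul_cancel₀ (by exact_mod_cast hk), Real.rpow_one]

lemma frobenius_norm_one' {n : ℕ} :
    ‖(1 : Matrix (Fin n) (Fin n) ℝ)‖ = Real.sqrt n := by
  have h : ‖(1 : Matrix (Fin n) (Fin n) ℝ)‖ ^ 2 = (n:ℝ) := by
    rw [frobenius_sq]
    have : ∀ i : Fin n, ∑ j, ((1 : Matrix (Fin n) (Fin n) ℝ) i j)^2 = 1 := by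
      intro i
      rw [Finset.sum_eq_single_of_mem i (Finset.mem_univ i)]
      · simp [Matrix.one_apply]
      · intro j _ hj
        simp [Matrix.one_apply, (Ne.symm hj)]
    rw [Finset.sum_congr rfl fun i _ => this i]
    simp
  calc ‖(1 : Matrix (Fin n) (Fin n) ℝ)‖
      = Real.sqrt (‖(1 : Matrix (Fin n) (Fin n) ℝ)‖^2) := (Real.sqrt_sq (norm_nonneg _)).symm
    _ = Real.sqrt n := by rw [h]

lemma key_upper {n m : ℕ} (A : Fin m → Matrix (Fin n) (Fin n) ℝ) (k : ℕ)
    (σ : Fin k → Fin m) :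
    l2OpNorm (wordProd A σ) ^ 2
      ≤ ((n:ℝ) * Real.sqrt n) * ‖(∑ i, liftCLM (A i)) ^ k‖ := by
  set B := ∑ i, liftCLM (A i) with hB
  set I1 : symMat n := ⟨1, Matrix.isSymm_one⟩ with hI1
  set M : Matrix (Fin n) (Fin n) ℝ := ↑((B ^ k) I1) with hMdef
  have hM : M = ∑ τ : Fin k → Fin m,
      wordProd A τ * (1 : Matrix (Fin n) (Fin n) ℝ) * (wordProd A τ)ᵀ := expansion A k I1
  have hdiag : ∑ i, M i i = ∑ τ : Fin k → Fin m, ‖wordProd A τ‖^2 := by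
    rw [hM]
    calc ∑ i, (∑ τ : Fin k → Fin m,
            wordProd A τ * (1 : Matrix (Fin n) (Fin n) ℝ) * (wordProd A τ)ᵀ) i i
        = ∑ i, ∑ τ : Fin k → Fin m,
            (wordProd A τ * (1 : Matrix (Fin n) (Fin n) ℝ) * (wordProd A τ)ᵀ) i i := by
          refine Finset.sum_congr rfl fun i _ => ?_
          simp [Matrix.sum_apply]
      _ = ∑ τ : Fin k → Fin m, ∑ i,
            (wordProd A τ * (1 : Matrix (Fin n) (Fin n) ℝ) * (wordProd A τ)ᵀ) i i :=
          Finset.sum_comm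
      _ = ∑ τ : Fin k → Fin m, ‖wordProd A τ‖^2 := by
          refine Finset.sum_congr rfl fun τ _ => ?_
          rw [frobenius_sq]
          simp [Matrix.mul_one, Matrix.mul_apply, Matrix.transpose_apply, pow_two]
  have hMii : ∀ i, M i i ≤ ‖M‖ := by
    intro i
    have h1 : M i i ^ 2 ≤ ‖M‖ ^ 2 := by
      rw [frobenius_sq]
      calc M i i ^ 2 ≤ ∑ j, M i j ^ 2 :=
            Finset.single_le_sum (f := fun j => M i j ^ 2)
              (fun j _ => sq_nonneg _) (Finset.mem_univ i)
        _ ≤ ∑ i', ∑ j, M i' j ^ 2 :=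
            Finset.single_le_sum (f := fun i' => ∑ j, M i' j ^ 2)
              (fun i' _ => Finset.sum_nonneg fun j _ => sq_nonneg _)
              (Finset.mem_univ i)
    calc M i i ≤ |M i i| := le_abs_self _
      _ = Real.sqrt (M i i ^ 2) := (Real.sqrt_sq_eq_abs _).symm
      _ ≤ Real.sqrt (‖M‖ ^ 2) := Real.sqrt_le_sqrt h1
      _ = ‖M‖ := Real.sqrt_sq (norm_nonneg _)
  have hMnorm : ‖M‖ ≤ ‖B ^ k‖ * Real.sqrt n := by
    have h1 : ‖M‖ = ‖(B ^ k) I1‖ := (Submodule.coe_norm _).symm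
    rw [h1]
    calc ‖(B ^ k) I1‖ ≤ ‖B ^ k‖ * ‖I1‖ := ContinuousLinearMap.le_opNorm _ _
      _ = ‖B ^ k‖ * Real.sqrt n := by
          rw [Submodule.coe_norm, hI1]
          rw [frobenius_norm_one']
  calc l2OpNorm (wordProd A σ) ^ 2 ≤ ‖wordProd A σ‖ ^ 2 :=
        pow_le_pow_left₀ (l2OpNorm_nonneg' _) (l2OpNorm_le_frobenius _) 2
    _ ≤ ∑ τ : Fin k → Fin m, ‖wordProd A τ‖^2 :=
        Finset.single_le_sum (f := fun τ : Fin k → Fin m => ‖wordProd A τ‖ ^ 2)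
          (fun τ _ => sq_nonneg _) (Finset.mem_univ σ)
    _ = ∑ i, M i i := hdiag.symm
    _ ≤ ∑ _i : Fin n, ‖M‖ := Finset.sum_le_sum fun i _ => hMii i
    _ = (n:ℝ) * ‖M‖ := by rw [Finset.sum_const, nsmul_eq_mul, Finset.card_univ,
        Fintype.card_fin]
    _ ≤ (n:ℝ) * (‖B ^ k‖ * Real.sqrt n) :=
        mul_le_mul_of_nonneg_left hMnorm (by positivity)
    _ = ((n:ℝ) * Real.sqrt n) * ‖B ^ k‖ := by ring

lemma key_lower {n m : ℕ} (hm : 0 < m) (A : Fin m → Matrix (Fin n) (Fin n) ℝ) (k : ℕ) :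
    ‖(∑ i, liftCLM (A i)) ^ k‖
      ≤ (n:ℝ) * (m:ℝ)^k * (⨆ σ : Fin k → Fin m, l2OpNorm (wordProd A σ))^2 := by
  haveI : Nonempty (Fin m) := ⟨⟨0, hm⟩⟩
  set Mk := ⨆ σ : Fin k → Fin m, l2OpNorm (wordProd A σ) with hMk
  have hMk0 : 0 ≤ Mk := Real.iSup_nonneg fun σ => l2OpNorm_nonneg' _
  have hble : ∀ σ : Fin k → Fin m, l2OpNorm (wordProd A σ) ≤ Mk := fun σ => by
    rw [hMk]
    exact le_ciSup (f := fun σ : Fin k → Fin m => l2OpNorm (wordProd A σ))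
      (Set.Finite.bddAbove (Set.finite_range _)) σ
  refine ContinuousLinearMap.opNorm_le_bound _ (by positivity) fun X => ?_
  rw [Submodule.coe_norm, Submodule.coe_norm]
  refine (le_of_eq (congrArg norm (expansion A k X))).trans ?_
  have per : ∀ τ : Fin k → Fin m,
      ‖wordProd A τ * (X : Matrix (Fin n) (Fin n) ℝ) * (wordProd A τ)ᵀ‖
        ≤ (n:ℝ) * Mk^2 * ‖(X : Matrix (Fin n) (Fin n) ℝ)‖ := by
    intro τ
    set P := wordProd A τ with hP
    have hPf : ‖P‖ ≤ Real.sqrt n * Mk := by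
      calc ‖P‖ ≤ Real.sqrt (Fintype.card (Fin n)) * l2OpNorm P := frobenius_le_l2OpNorm P
        _ = Real.sqrt n * l2OpNorm P := by rw [Fintype.card_fin]
        _ ≤ Real.sqrt n * Mk :=
            mul_le_mul_of_nonneg_left (hble τ) (Real.sqrt_nonneg _)
    calc ‖P * (X : Matrix (Fin n) (Fin n) ℝ) * Pᵀ‖
        ≤ ‖P * (X : Matrix (Fin n) (Fin n) ℝ)‖ * ‖Pᵀ‖ := Matrix.frobenius_norm_mul _ _
      _ ≤ (‖P‖ * ‖(X : Matrix (Fin n) (Fin n) ℝ)‖) * ‖P‖ := by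
          rw [Matrix.frobenius_norm_transpose]
          exact mul_le_mul_of_nonneg_right (Matrix.frobenius_norm_mul _ _) (norm_nonneg _)
      _ ≤ ((Real.sqrt n * Mk) * ‖(X : Matrix (Fin n) (Fin n) ℝ)‖) * (Real.sqrt n * Mk) := by
          apply mul_le_mul _ hPf (norm_nonneg _) (by positivity)
          exact mul_le_mul_of_nonneg_right hPf (norm_nonneg _)
      _ = (Real.sqrt n * Real.sqrt n) * (Mk^2 * ‖(X : Matrix (Fin n) (Fin n) ℝ)‖) := by ring
      _ = (n:ℝ) * Mk^2 * ‖(X : Matrix (Fin n) (Fin n) ℝ)‖ := by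
          rw [Real.mul_self_sqrt (Nat.cast_nonneg n)]; ring
  calc ‖∑ τ : Fin k → Fin m,
        wordProd A τ * (X : Matrix (Fin n) (Fin n) ℝ) * (wordProd A τ)ᵀ‖
      ≤ ∑ τ : Fin k → Fin m,
          ‖wordProd A τ * (X : Matrix (Fin n) (Fin n) ℝ) * (wordProd A τ)ᵀ‖ :=
        norm_sum_le _ _
    _ ≤ ∑ _τ : Fin k → Fin m, (n:ℝ) * Mk^2 * ‖(X : Matrix (Fin n) (Fin n) ℝ)‖ :=
        Finset.sum_le_sum fun τ _ => per τ
    _ = (m:ℝ)^k * ((n:ℝ) * Mk^2 * ‖(X : Matrix (Fin n) (Fin n) ℝ)‖) := by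
        rw [Finset.sum_const, nsmul_eq_mul, Finset.card_univ]
        norm_num [Fintype.card_fun]
    _ = (n:ℝ) * (m:ℝ)^k * Mk^2 * ‖(X : Matrix (Fin n) (Fin n) ℝ)‖ := by ring

lemma opNorm_pow_le'' {E : Type*} [NormedAddCommGroup E] [NormedSpace ℝ E]
    (B : E →L[ℝ] E) : ∀ k : ℕ, ‖B ^ k‖ ≤ max 1 ‖B‖ ^ k := by
  intro k
  induction k with
  | zero => simpa [← ContinuousLinearMap.one_def] using ContinuousLinearMap.norm_id_le
  | succ k ih =>
      rw [pow_succ, ContinuousLinearMap.mul_def, pow_succ]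
      calc ‖(B ^ k).comp B‖ ≤ ‖B ^ k‖ * ‖B‖ := ContinuousLinearMap.opNorm_comp_le _ _
        _ ≤ max 1 ‖B‖ ^ k * max 1 ‖B‖ :=
            mul_le_mul ih (le_max_right _ _) (norm_nonneg _) (by positivity)

end Helpers

set_option maxHeartbeats 1000000

/-- With `B : X ↦ ∑ᵢ Aᵢ X Aᵢᵀ` on the space of symmetric matrices,
`(1/√m) ρ(B)^{1/2} ≤ ρ(A₁, …, Aₘ) ≤ ρ(B)^{1/2}`. -/
theorem jsr_bounds_via_lift {n m : ℕ} (hm : 0 < m)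
    (A : Fin m → Matrix (Fin n) (Fin n) ℝ) :
    (1 / Real.sqrt m) * Real.sqrt (specRadOp (∑ i, liftCLM (A i))) ≤ jsr A ∧
      jsr A ≤ Real.sqrt (specRadOp (∑ i, liftCLM (A i))) := by
  haveI : Nonempty (Fin m) := ⟨⟨0, hm⟩⟩
  show (1 / Real.sqrt m) * Real.sqrt (specRadOp (∑ i, liftCLM (A i) : symMat n →L[ℝ] symMat n))
      ≤ jsr A ∧ jsr A ≤ Real.sqrt (specRadOp (∑ i, liftCLM (A i) : symMat n →L[ℝ] symMat n))
  set B := ∑ i, liftCLM (A i) with hB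
  clear_value B
  have hLdef : specRadOp B
      = Filter.limsup (fun k : ℕ => ‖B ^ k‖ ^ ((1:ℝ)/(k:ℝ))) Filter.atTop := rfl
  have hJdef : jsr A
      = Filter.limsup (fun k : ℕ =>
          ⨆ σ : Fin k → Fin m, l2OpNorm (wordProd A σ) ^ ((1:ℝ)/(k:ℝ)))
          Filter.atTop := rfl
  set g : ℕ → ℝ := fun k => ‖B ^ k‖ ^ ((1:ℝ)/(k:ℝ)) with hg
  set F : ℕ → ℝ := fun k =>
    ⨆ σ : Fin k → Fin m, l2OpNorm (wordProd A σ) ^ ((1:ℝ)/(k:ℝ)) with hF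
  clear_value g F
  -- nonnegativity and boundedness of `g`
  have hg0 : ∀ k, 0 ≤ g k := fun k => by
    simp only [hg]; exact Real.rpow_nonneg (ContinuousLinearMap.opNorm_nonneg _) _
  have hgB : ∀ k, g k ≤ max 1 ‖B‖ := by
    intro k
    simp only [hg]
    rcases Nat.eq_zero_or_pos k with hk | hk
    · subst hk
      rw [Nat.cast_zero, div_zero, Real.rpow_zero]
      exact le_max_left 1 ‖B‖
    · have hk0 : k ≠ 0 := hk.ne'
      calc ‖B ^ k‖ ^ ((1:ℝ)/(k:ℝ)) ≤ (max 1 ‖B‖ ^ k) ^ ((1:ℝ)/(k:ℝ)) :=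
            Real.rpow_le_rpow (ContinuousLinearMap.opNorm_nonneg _) (opNorm_pow_le'' B k)
              (by positivity)
        _ = max 1 ‖B‖ := pow_rpow_inv' (by positivity) hk0
  -- nonnegativity and boundedness of `F`
  set C0 : ℝ := 1 + ∑ i, l2OpNorm (A i) with hC0def
  have hC0 : 1 ≤ C0 := by
    rw [hC0def]
    have : 0 ≤ ∑ i, l2OpNorm (A i) :=
      Finset.sum_nonneg fun i _ => l2OpNorm_nonneg' _
    linarith
  have hC : ∀ i, l2OpNorm (A i) ≤ C0 := by
    intro i
    rw [hC0def]
    have h1 : l2OpNorm (A i) ≤ ∑ j, l2OpNorm (A j) :=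
      Finset.single_le_sum (f := fun j => l2OpNorm (A j))
        (fun j _ => l2OpNorm_nonneg' _) (Finset.mem_univ i)
    linarith
  have hF0 : ∀ k, 0 ≤ F k := fun k => by
    simp only [hF]
    exact Real.iSup_nonneg fun σ => Real.rpow_nonneg (l2OpNorm_nonneg' _) _
  have hFB : ∀ k, F k ≤ C0 := by
    intro k
    simp only [hF]
    rcases Nat.eq_zero_or_pos k with hk | hk
    · subst hk
      have heq : (fun σ : Fin 0 → Fin m =>
          l2OpNorm (wordProd A σ) ^ ((1:ℝ)/((0:ℕ):ℝ))) = fun _ => (1:ℝ) := by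
        funext σ; norm_num
      rw [heq, ciSup_const]
      exact hC0
    · have hk0 : k ≠ 0 := hk.ne'
      apply ciSup_le
      intro σ
      calc l2OpNorm (wordProd A σ) ^ ((1:ℝ)/(k:ℝ))
          ≤ (C0 ^ k) ^ ((1:ℝ)/(k:ℝ)) :=
            Real.rpow_le_rpow (l2OpNorm_nonneg' _)
              (l2OpNorm_wordProd_le A hC hC0 σ) (by positivity)
        _ = C0 := pow_rpow_inv' (by linarith) hk0
  have hgbdd : Filter.IsBoundedUnder (· ≤ ·) Filter.atTop g :=
    Filter.isBoundedUnder_of ⟨max 1 ‖B‖, hgB⟩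
  have hFbdd : Filter.IsBoundedUnder (· ≤ ·) Filter.atTop F :=
    Filter.isBoundedUnder_of ⟨C0, hFB⟩
  have hL0 : 0 ≤ specRadOp B := by rw [hLdef]; exact limsup_nonneg' hg0 hgB
  have hJ0 : 0 ≤ jsr A := by rw [hJdef]; exact limsup_nonneg' hF0 hFB
  -- upper bound
  have upper : ∀ ε > 0, jsr A ≤ (1 + ε) * Real.sqrt (specRadOp B + ε) := by
    intro ε hε
    have h1 : ∀ᶠ k in Filter.atTop, g k < specRadOp B + ε :=
      Filter.eventually_lt_of_limsup_lt (by rw [← hLdef]; linarith) hgbdd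
    have h2 : ∀ᶠ k : ℕ in Filter.atTop,
        (Real.sqrt ((n:ℝ) * Real.sqrt n)) ^ ((1:ℝ)/(k:ℝ)) ≤ 1 + ε :=
      ev_rpow_le (Real.sqrt_nonneg _) hε
    rw [hJdef]
    apply limsup_le_of_ev hF0
    filter_upwards [h1, h2, Filter.eventually_ge_atTop 1] with k hk1 hk2 hk3
    simp only [hg] at hk1
    simp only [hF]
    have hk0 : k ≠ 0 := by omega
    apply ciSup_le
    intro σ
    have hKU := key_upper A k σ
    rw [← hB] at hKU
    have hL2 : l2OpNorm (wordProd A σ)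
        ≤ Real.sqrt ((n:ℝ) * Real.sqrt n) * Real.sqrt ‖B ^ k‖ := by
      calc l2OpNorm (wordProd A σ)
          = Real.sqrt (l2OpNorm (wordProd A σ) ^ 2) :=
            (Real.sqrt_sq (l2OpNorm_nonneg' _)).symm
        _ ≤ Real.sqrt (((n:ℝ) * Real.sqrt n) * ‖B ^ k‖) :=
            Real.sqrt_le_sqrt hKU
        _ = Real.sqrt ((n:ℝ) * Real.sqrt n) * Real.sqrt ‖B ^ k‖ :=
            Real.sqrt_mul (by positivity) _
    calc l2OpNorm (wordProd A σ) ^ ((1:ℝ)/(k:ℝ))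
        ≤ (Real.sqrt ((n:ℝ) * Real.sqrt n) * Real.sqrt ‖B ^ k‖) ^ ((1:ℝ)/(k:ℝ)) :=
          Real.rpow_le_rpow (l2OpNorm_nonneg' _) hL2 (by positivity)
      _ = (Real.sqrt ((n:ℝ) * Real.sqrt n)) ^ ((1:ℝ)/(k:ℝ))
            * (Real.sqrt ‖B ^ k‖) ^ ((1:ℝ)/(k:ℝ)) :=
          Real.mul_rpow (Real.sqrt_nonneg _) (Real.sqrt_nonneg _)
      _ ≤ (1 + ε) * (Real.sqrt ‖B ^ k‖) ^ ((1:ℝ)/(k:ℝ)) :=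
          mul_le_mul_of_nonneg_right hk2
            (Real.rpow_nonneg (Real.sqrt_nonneg _) _)
      _ = (1 + ε) * Real.sqrt (‖B ^ k‖ ^ ((1:ℝ)/(k:ℝ))) := by
          congr 1
          rw [Real.sqrt_eq_rpow, Real.sqrt_eq_rpow]
          rw [← Real.rpow_mul (norm_nonneg _),
            ← Real.rpow_mul (norm_nonneg _)]
          ring_nf
      _ ≤ (1 + ε) * Real.sqrt (specRadOp B + ε) :=
          mul_le_mul_of_nonneg_left (Real.sqrt_le_sqrt hk1.le) (by positivity)
  have hupper : jsr A ≤ Real.sqrt (specRadOp B) := by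
    have hcont : Continuous fun ε : ℝ => (1 + ε) * Real.sqrt (specRadOp B + ε) :=
      (continuous_const.add continuous_id).mul
        (Real.continuous_sqrt.comp (continuous_const.add continuous_id))
    have := le_of_eps hcont upper
    simpa using this
  -- lower bound
  have lower : ∀ ε > 0, specRadOp B ≤ (1 + ε) * ((m:ℝ) * (jsr A + ε) ^ 2) := by
    intro ε hε
    have h1 : ∀ᶠ k in Filter.atTop, F k < jsr A + ε :=
      Filter.eventually_lt_of_limsup_lt (by rw [← hJdef]; linarith) hFbdd
    have h2 : ∀ᶠ k : ℕ in Filter.atTop, ((n:ℝ)) ^ ((1:ℝ)/(k:ℝ)) ≤ 1 + ε :=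
      ev_rpow_le (Nat.cast_nonneg n) hε
    rw [hLdef]
    apply limsup_le_of_ev hg0
    filter_upwards [h1, h2, Filter.eventually_ge_atTop 1] with k hk1 hk2 hk3
    simp only [hF] at hk1
    simp only [hg]
    have hk0 : k ≠ 0 := by omega
    have hJε : 0 ≤ jsr A + ε := by linarith
    have hMk : (⨆ σ : Fin k → Fin m, l2OpNorm (wordProd A σ)) ≤ (jsr A + ε) ^ k := by
      apply ciSup_le
      intro σ
      have e1 : l2OpNorm (wordProd A σ)
          = (l2OpNorm (wordProd A σ) ^ ((1:ℝ)/(k:ℝ))) ^ k :=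
        (rpow_inv_pow' (l2OpNorm_nonneg' _) hk0).symm
      rw [e1]
      apply pow_le_pow_left₀ (Real.rpow_nonneg (l2OpNorm_nonneg' _) _)
      have hle : l2OpNorm (wordProd A σ) ^ ((1:ℝ)/(k:ℝ))
          ≤ ⨆ σ : Fin k → Fin m, l2OpNorm (wordProd A σ) ^ ((1:ℝ)/(k:ℝ)) :=
        le_ciSup
          (f := fun σ : Fin k → Fin m => l2OpNorm (wordProd A σ) ^ ((1:ℝ)/(k:ℝ)))
          (Set.Finite.bddAbove (Set.finite_range _)) σ
      exact hle.trans hk1.le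
    have hBk : ‖B ^ k‖ ≤ (n:ℝ) * (m:ℝ) ^ k * ((jsr A + ε) ^ k) ^ 2 := by
      have hKL := key_lower hm A k
      rw [← hB] at hKL
      refine hKL.trans ?_
      have hMk0 : 0 ≤ ⨆ σ : Fin k → Fin m, l2OpNorm (wordProd A σ) :=
        Real.iSup_nonneg fun σ => l2OpNorm_nonneg' _
      exact mul_le_mul_of_nonneg_left (pow_le_pow_left₀ hMk0 hMk 2) (by positivity)
    calc ‖B ^ k‖ ^ ((1:ℝ)/(k:ℝ))
        ≤ ((n:ℝ) * ((m:ℝ) ^ k * ((jsr A + ε) ^ k) ^ 2)) ^ ((1:ℝ)/(k:ℝ)) := by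
          apply Real.rpow_le_rpow (ContinuousLinearMap.opNorm_nonneg _) _ (by positivity)
          calc ‖B ^ k‖ ≤ (n:ℝ) * (m:ℝ) ^ k * ((jsr A + ε) ^ k) ^ 2 := hBk
            _ = (n:ℝ) * ((m:ℝ) ^ k * ((jsr A + ε) ^ k) ^ 2) := by ring
      _ = (n:ℝ) ^ ((1:ℝ)/(k:ℝ))
            * (((m:ℝ) ^ k) ^ ((1:ℝ)/(k:ℝ))
              * ((((jsr A + ε) ^ k) ^ 2)) ^ ((1:ℝ)/(k:ℝ))) := by
          rw [Real.mul_rpow (by positivity) (by positivity),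
            Real.mul_rpow (by positivity) (by positivity)]
      _ = (n:ℝ) ^ ((1:ℝ)/(k:ℝ)) * ((m:ℝ) * (jsr A + ε) ^ 2) := by
          rw [pow_rpow_inv' (Nat.cast_nonneg m) hk0]
          have e2 : ((jsr A + ε) ^ k) ^ 2 = ((jsr A + ε) ^ 2) ^ k := by
            rw [← pow_mul, ← pow_mul, Nat.mul_comm]
          rw [e2, pow_rpow_inv' (sq_nonneg _) hk0]
      _ ≤ (1 + ε) * ((m:ℝ) * (jsr A + ε) ^ 2) :=
          mul_le_mul_of_nonneg_right hk2 (by positivity)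
  have hlower : specRadOp B ≤ (m:ℝ) * (jsr A) ^ 2 := by
    have hcont : Continuous fun ε : ℝ => (1 + ε) * ((m:ℝ) * (jsr A + ε) ^ 2) :=
      (continuous_const.add continuous_id).mul
        (continuous_const.mul (((continuous_const.add continuous_id)).pow 2))
    have := le_of_eps hcont lower
    simpa using this
  constructor
  · have h1 : Real.sqrt (specRadOp B) ≤ Real.sqrt ((m:ℝ) * (jsr A) ^ 2) :=
      Real.sqrt_le_sqrt hlower
    have h2 : Real.sqrt ((m:ℝ) * (jsr A) ^ 2) = Real.sqrt m * jsr A := by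
      rw [Real.sqrt_mul (Nat.cast_nonneg m), Real.sqrt_sq hJ0]
    have hsm : 0 < Real.sqrt m := Real.sqrt_pos.mpr (by exact_mod_cast hm)
    calc (1 / Real.sqrt m) * Real.sqrt (specRadOp B)
        ≤ (1 / Real.sqrt m) * (Real.sqrt m * jsr A) :=
          mul_le_mul_of_nonneg_left (h1.trans_eq h2) (by positivity)
      _ = jsr A := by field_simp
  · exact hupper
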